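/- Assume N > 1 and 0 < α ≤ 1, and let the regularizer be G_TV. Define γ* ∈ ℝ^{M×N} row-wise by: for 2 ≤ k ≤ N, γ*_{i j_k^i} = 1/(MN) if d_{i j_k^i} − d_{i j_1^i} < (1−α)·C/α and γ*_{i j_k^i} = 0 otherwise, and γ*_{i j_1^i} = 1/M − Σ_{k=2}^{N} γ*_{i j_k^i}. If for every i ∈ [M] and every k ∈ [N] one has d_{i j_k^i} − d_{i j_1^i} ≠ (1−α)·C/α, and for every i ∈ [M] one has d_{i j_1^i} ≠ d_{i j_2^i}, then γ* is the unique minimizer of L over feasible matrices: L(γ*) < L(γ) for every feasible γ ≠ γ*. -/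

import Mathlib

open Finset

private lemma tA (b t c q0 x : ℝ) (hb : 0 ≤ b) (hq : t ≤ q0) :
    c*q0 + b/2*|q0-t| - (c+b/2)*q0 ≤ c*x + b/2*|x-t| - (c+b/2)*x := by
  rw [abs_of_nonneg (by linarith : (0:ℝ) ≤ q0 - t)]
  nlinarith [mul_nonneg hb (sub_nonneg.2 (le_abs_self (x-t)))]

private lemma tB (b t c e x : ℝ) (h0 : 0 < e - c) (h1 : e - c < b) (hx : x ≠ t) :
    e*t - (c+b/2)*t < e*x + b/2*|x-t| - (c+b/2)*x := by
  rcases hx.lt_or_gt with h | h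
  · rw [abs_of_neg (by linarith : x - t < 0)]; nlinarith
  · rw [abs_of_pos (by linarith : (0:ℝ) < x - t)]; nlinarith

private lemma tC (b t c e x : ℝ) (hb : 0 ≤ b) (h1 : b < e - c) (hx : 0 < x) :
    b/2*t < e*x + b/2*|x-t| - (c+b/2)*x := by
  nlinarith [neg_abs_le (x-t), mul_pos (show (0:ℝ) < e - c - b by linarith) hx,
    mul_nonneg hb (sub_nonneg.2 (neg_abs_le (x-t)))]

private lemma row_core {N : ℕ} (a b t : ℝ) (hb : 0 ≤ b) (ht : 0 < t)
    (dd : Fin N → ℝ) (q p : Fin N → ℝ) (m0 : Fin N)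
    (hq0 : t ≤ q m0)
    (hqj : ∀ j, j ≠ m0 →
      (q j = t ∧ 0 < a * dd j - a * dd m0 ∧ a * dd j - a * dd m0 < b) ∨
      (q j = 0 ∧ b < a * dd j - a * dd m0))
    (hp : ∀ j, 0 ≤ p j)
    (hsum : ∑ j, p j = ∑ j, q j)
    (hne : p ≠ q) :
    ∑ j, (a * dd j * q j + b/2 * |q j - t|) < ∑ j, (a * dd j * p j + b/2 * |p j - t|) := by
  set lam : ℝ := a * dd m0 + b / 2 with hlam
  have hex : ∃ j, j ≠ m0 ∧ p j ≠ q j := by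
    by_contra hcon
    push_neg at hcon
    apply hne
    funext j
    by_cases hj : j = m0
    · subst hj
      have h1 : ∑ x ∈ univ.erase j, p x = ∑ x ∈ univ.erase j, q x :=
        Finset.sum_congr rfl fun x hx => hcon x (Finset.mem_erase.1 hx).1
      have h2 := Finset.add_sum_erase univ p (Finset.mem_univ j)
      have h3 := Finset.add_sum_erase univ q (Finset.mem_univ j)
      linarith
    · exact hcon j hj
  obtain ⟨j0, hj0, hpq0⟩ := hex
  have keyS : ∀ j, j ≠ m0 → p j ≠ q j →
      a * dd j * q j + b/2 * |q j - t| - lam * q j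
        < a * dd j * p j + b/2 * |p j - t| - lam * p j := by
    intro j hj hpq
    rcases hqj j hj with ⟨hqt, h0, h1⟩ | ⟨hqz, h1⟩
    · rw [hqt]
      have := tB b t (a * dd m0) (a * dd j) (p j) h0 h1 (by rw [hqt] at hpq; exact hpq)
      have habs : |t - t| = 0 := by simp
      rw [habs, hlam]; linarith
    · rw [hqz]
      have hx : 0 < p j := lt_of_le_of_ne (hp j) (by rw [hqz] at hpq; exact fun h => hpq h.symm)
      have := tC b t (a * dd m0) (a * dd j) (p j) hb h1 hx
      have habs : |(0:ℝ) - t| = t := by rw [abs_of_nonpos (by linarith)]; ring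
      rw [habs, hlam]; linarith
  have key : ∀ j,
      a * dd j * q j + b/2 * |q j - t| - lam * q j
        ≤ a * dd j * p j + b/2 * |p j - t| - lam * p j := by
    intro j
    by_cases hpq : p j = q j
    · rw [hpq]
    · by_cases hj : j = m0
      · subst hj
        have := tA b t (a * dd j) (q j) (p j) hb hq0
        rw [hlam]; linarith
      · exact (keyS j hj hpq).le
  have H : ∑ j, (a * dd j * q j + b/2 * |q j - t| - lam * q j)
      < ∑ j, (a * dd j * p j + b/2 * |p j - t| - lam * p j) :=
    Finset.sum_lt_sum (fun j _ => key j) ⟨j0, Finset.mem_univ _, keyS j0 hj0 hpq0⟩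
  rw [Finset.sum_sub_distrib, Finset.sum_sub_distrib, ← Finset.mul_sum, ← Finset.mul_sum, hsum] at H
  linarith

/-- Theorem 3 (uniqueness part): with `G_TV`, if no sorted distance gap equals the
threshold `(1-α)C/α` and there is no tie between the first and second nearest neighbors,
then the transport `γ*` is the unique minimizer. -/
theorem stmt_3 (M N : ℕ) (hM : 1 ≤ M) (hN : 1 < N)
    (d : Fin M → Fin N → ℝ) (hd : ∀ i j, 0 ≤ d i j)
    (C α : ℝ) (hC : 0 < C) (hα0 : 0 < α) (hα1 : α ≤ 1)
    (σ : Fin M → Equiv.Perm (Fin N))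
    (hsort : ∀ i, Monotone fun k => d i (σ i k))
    (γstar : Fin M → Fin N → ℝ)
    (hγstar : ∀ i (k : Fin N), (k : ℕ) ≠ 0 →
      γstar i (σ i k) =
        if d i (σ i k) - d i (σ i ⟨0, by omega⟩) < (1 - α) * C / α then 1 / ((M : ℝ) * N)
        else 0)
    (hγstar0 : ∀ i, γstar i (σ i ⟨0, by omega⟩) =
      1 / (M : ℝ) - ∑ k ∈ Finset.univ.filter (fun k : Fin N => (k : ℕ) ≠ 0), γstar i (σ i k))
    (hne1 : ∀ i (k : Fin N), d i (σ i k) - d i (σ i ⟨0, by omega⟩) ≠ (1 - α) * C / α)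
    (hne2 : ∀ i, d i (σ i ⟨0, by omega⟩) ≠ d i (σ i ⟨1, by omega⟩))
    (L : (Fin M → Fin N → ℝ) → ℝ)
    (hL : ∀ γ, L γ = (α / C) * (∑ i, ∑ j, γ i j * d i j)
      + (1 - α) * ((1 / 2) * ∑ i, ∑ j, |γ i j - 1 / ((M : ℝ) * N)|)) :
    ∀ γ : Fin M → Fin N → ℝ,
      ((∀ i j, 0 ≤ γ i j) ∧ (∀ i, ∑ j, γ i j = 1 / (M : ℝ))) → γ ≠ γstar →
      L γstar < L γ := by
  intro γ hfeas hneq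
  obtain ⟨hpos, hsum⟩ := hfeas
  have hM0 : (0:ℝ) < M := by exact_mod_cast (by omega : 0 < M)
  have hN0 : (0:ℝ) < N := by exact_mod_cast (by omega : 0 < N)
  set a : ℝ := α / C with ha_def
  set b : ℝ := 1 - α with hb_def
  set t : ℝ := 1 / ((M:ℝ) * N) with ht_def
  have ha : 0 < a := div_pos hα0 hC
  have hb : 0 ≤ b := by rw [hb_def]; linarith
  have ht : 0 < t := by rw [ht_def]; exact one_div_pos.2 (mul_pos hM0 hN0)
  have haT : a * (b * C / α) = b := by
    rw [ha_def]; field_simp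
  -- convert filter to erase
  have hfilter : univ.filter (fun k : Fin N => (k:ℕ) ≠ 0)
      = univ.erase (⟨0, by omega⟩ : Fin N) := by
    ext k
    simp [Fin.ext_iff]
  -- L as a double sum
  have hLsum : ∀ g : Fin M → Fin N → ℝ,
      L g = ∑ i, ∑ j, (a * d i j * g i j + b/2 * |g i j - t|) := by
    intro g
    have e2 : a * (∑ i, ∑ j, g i j * d i j) = ∑ i, ∑ j, a * d i j * g i j := by
      rw [Finset.mul_sum]
      refine Finset.sum_congr rfl fun i _ => ?_
      rw [Finset.mul_sum]
      exact Finset.sum_congr rfl fun j _ => by ring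
    have e3 : b * (1/2 * ∑ i, ∑ j, |g i j - t|) = ∑ i, ∑ j, b/2 * |g i j - t| := by
      rw [show b * (1/2 * ∑ i, ∑ j, |g i j - t|) = (b/2) * ∑ i, ∑ j, |g i j - t| by ring,
        Finset.mul_sum]
      exact Finset.sum_congr rfl fun i _ => by rw [Finset.mul_sum]
    have e1 : ∑ i, ∑ j, (a * d i j * g i j + b/2 * |g i j - t|)
        = (∑ i, ∑ j, a * d i j * g i j) + ∑ i, ∑ j, b/2 * |g i j - t| := by
      rw [← Finset.sum_add_distrib]
      exact Finset.sum_congr rfl fun i _ => Finset.sum_add_distrib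
    rw [hL g, e2, e3, e1]
  -- per-row strict inequality
  have hrowlt : ∀ i, γ i ≠ γstar i →
      ∑ j, (a * d i j * γstar i j + b/2 * |γstar i j - t|)
        < ∑ j, (a * d i j * γ i j + b/2 * |γ i j - t|) := by
    intro i hnei
    set m0 : Fin N := σ i ⟨0, by omega⟩ with hm0
    -- minimality
    have hmin : ∀ j, d i m0 ≤ d i j := by
      intro j
      have := hsort i (show (⟨0, by omega⟩ : Fin N) ≤ (σ i).symm j by simp [Fin.le_def])
      simpa using this
    have hstrict : ∀ j, j ≠ m0 → d i m0 < d i j := by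
      intro j hj
      have hk : (σ i).symm j ≠ (⟨0, by omega⟩ : Fin N) := by
        intro h
        apply hj
        rw [← Equiv.apply_symm_apply (σ i) j, h]
      have h1 : (⟨1, by omega⟩ : Fin N) ≤ (σ i).symm j := by
        have hv : ((σ i).symm j : ℕ) ≠ 0 := fun h => hk (Fin.ext h)
        simp only [Fin.le_def]
        omega
      have h2 : d i (σ i ⟨1, by omega⟩) ≤ d i j := by simpa using hsort i h1
      have h3 : d i m0 < d i (σ i ⟨1, by omega⟩) :=
        lt_of_le_of_ne (hsort i (by simp [Fin.le_def])) (hne2 i)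
      linarith
    -- values of γstar off the minimum
    have hqval : ∀ j, j ≠ m0 →
        γstar i j = if d i j - d i m0 < b * C / α then t else 0 := by
      intro j hj
      have hk : (((σ i).symm j : Fin N) : ℕ) ≠ 0 := by
        intro h
        apply hj
        rw [← Equiv.apply_symm_apply (σ i) j]
        congr 1
        exact Fin.ext h
      have := hγstar i ((σ i).symm j) hk
      simpa using this
    have hqj : ∀ j, j ≠ m0 →
        (γstar i j = t ∧ 0 < a * d i j - a * d i m0 ∧ a * d i j - a * d i m0 < b) ∨
        (γstar i j = 0 ∧ b < a * d i j - a * d i m0) := by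
      intro j hj
      have hd2 := hstrict j hj
      have hne1' : d i j - d i m0 ≠ b * C / α := by
        have := hne1 i ((σ i).symm j)
        simpa using this
      rcases lt_or_gt_of_ne hne1' with hlt | hgt
      · left
        refine ⟨by rw [hqval j hj, if_pos hlt], by nlinarith, ?_⟩
        have := mul_lt_mul_of_pos_left hlt ha
        rw [haT] at this
        nlinarith
      · right
        refine ⟨by rw [hqval j hj, if_neg (not_lt.2 hgt.le)], ?_⟩
        have := mul_lt_mul_of_pos_left hgt ha
        rw [haT] at this
        nlinarith
    -- lower bound on γstar at minimum
    have hcard : (univ.filter (fun k : Fin N => (k:ℕ) ≠ 0)).card = N - 1 := by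
      rw [hfilter, Finset.card_erase_of_mem (Finset.mem_univ _), Finset.card_univ,
        Fintype.card_fin]
    have hterm_le : ∀ k ∈ univ.filter (fun k : Fin N => (k:ℕ) ≠ 0),
        γstar i (σ i k) ≤ t := by
      intro k hk
      rw [hγstar i k (Finset.mem_filter.1 hk).2]
      split
      · exact le_refl t
      · exact ht.le
    have hSle : ∑ k ∈ univ.filter (fun k : Fin N => (k:ℕ) ≠ 0), γstar i (σ i k)
        ≤ ((N:ℝ) - 1) * t := by
      calc ∑ k ∈ univ.filter (fun k : Fin N => (k:ℕ) ≠ 0), γstar i (σ i k)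
          ≤ ∑ _k ∈ univ.filter (fun k : Fin N => (k:ℕ) ≠ 0), t :=
            Finset.sum_le_sum hterm_le
        _ = ((N:ℝ) - 1) * t := by
            rw [Finset.sum_const, hcard, nsmul_eq_mul]
            congr 1
            push_cast [Nat.cast_sub (by omega : 1 ≤ N)]
            ring
    have hNt : (N:ℝ) * t = 1 / M := by
      rw [ht_def]
      field_simp
    have hq0 : t ≤ γstar i m0 := by
      rw [hm0, hγstar0 i]
      nlinarith
    -- row sum of γstar
    have hsumq : ∑ j, γstar i j = 1 / (M:ℝ) := by
      have h1 : ∑ j, γstar i j = ∑ k, γstar i (σ i k) :=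
        (Equiv.sum_comp (σ i) (γstar i)).symm
      have h2 : γstar i (σ i ⟨0, by omega⟩)
          + ∑ k ∈ univ.erase (⟨0, by omega⟩ : Fin N), γstar i (σ i k)
          = ∑ k, γstar i (σ i k) :=
        Finset.add_sum_erase univ (fun k => γstar i (σ i k)) (Finset.mem_univ _)
      rw [h1, ← h2, ← hfilter, hγstar0 i]
      ring
    exact row_core a b t hb ht (d i) (γstar i) (γ i) m0 hq0 hqj (hpos i)
      (by rw [hsum i, hsumq]) hnei
  have hex : ∃ i, γ i ≠ γstar i := by
    by_contra h
    push_neg at h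
    exact hneq (funext h)
  obtain ⟨i0, hi0⟩ := hex
  rw [hLsum γ, hLsum γstar]
  refine Finset.sum_lt_sum (fun i _ => ?_) ⟨i0, Finset.mem_univ _, hrowlt i0 hi0⟩
  by_cases h : γ i = γstar i
  · rw [h]
  · exact (hrowlt i h).le
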